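/- Let ν ≤ 2 and let S(h) be defined by S(h)(x) = (1/(2(x+ν)p̂_ν(x)))·∫_{−ν}^x (h(t) − E[h(G(ν))]) p̂_ν(t) dt for x > −ν, where p̂_ν is the density of G(ν) and ‖h‖_∞ ≤ 1. Then |S(h)(x)| ≤ 2/(x+ν) for all x > −ν; in particular S(h)(x) → 0 as x → ∞, uniformly over all such h. -/

import Mathlib

open MeasureTheory Set

/-- The density of the centered Gamma distribution `G(ν)`:
`p̂_ν(x) = 2^{−ν/2}·Γ(ν/2)^{−1}·(x+ν)^{ν/2−1}·e^{−(x+ν)/2}` for `x > −ν`, else `0`. -/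
noncomputable def centeredGammaDens (ν x : ℝ) : ℝ :=
  if -ν < x then
    2 ^ (-ν / 2) * (Real.Gamma (ν / 2))⁻¹ * (x + ν) ^ (ν / 2 - 1) *
      Real.exp (-(x + ν) / 2)
  else 0

/-- The solution of the centered Gamma Stein equation on `(−ν,∞)`:
`S(h)(x) = (1/(2(x+ν)p̂_ν(x)))·∫_{−ν}^x (h(t) − E[h(G(ν))]) p̂_ν(t) dt`. -/
noncomputable def steinSol (ν : ℝ) (h : ℝ → ℝ) (x : ℝ) : ℝ :=
  (∫ t in (-ν)..x, (h t - ∫ s in Ioi (-ν), h s * centeredGammaDens ν s) *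
      centeredGammaDens ν t) /
    (2 * (x + ν) * centeredGammaDens ν x)

/-! Since `∫ (h − E h) p̂_ν = 0` over `(−ν, ∞)`, the integral from `−ν` to `x` is minus the
tail integral from `x`. There `|h − E h| ≤ 2`, and for `ν ≤ 2` the factor `(t + ν)^{ν/2 − 1}` is
nonincreasing, so `p̂_ν(t) ≤ p̂_ν(x) e^{−(t − x)/2}` for `t ≥ x` and the tail is at most
`4 p̂_ν(x)`. Dividing by `2 (x + ν) p̂_ν(x)` gives `2 / (x + ν)`. -/

theorem integral_Ioi_comp_add_right {E : Type*} [NormedAddCommGroup E] [NormedSpace ℝ E]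
    (g : ℝ → E) (a c : ℝ) : ∫ t in Ioi (a - c), g (t + c) = ∫ u in Ioi a, g u := by
  rw [← preimage_add_const_Ioi]
  exact (measurePreserving_add_right volume c).setIntegral_preimage_emb
    (measurableEmbedding_addRight c) g (Ioi a)

section Density

variable {α : Type*} [MeasurableSpace α] {μ : Measure α} {p h : α → ℝ} {C : ℝ}

theorem abs_integral_mul_density_le (hp0 : ∀ x, 0 ≤ p x) (hp1 : ∫ x, p x ∂μ = 1)
    (hb : ∀ x, |h x| ≤ C) : |∫ x, h x * p x ∂μ| ≤ C := by
  have hp : Integrable p μ := Integrable.of_integral_ne_zero (by simp [hp1])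
  have hhp (x : α) : |h x * p x| ≤ C * p x := by
    rw [abs_mul, abs_of_nonneg (hp0 x)]
    exact mul_le_mul_of_nonneg_right (hb x) (hp0 x)
  calc |∫ x, h x * p x ∂μ| ≤ ∫ x, C * p x ∂μ :=
        norm_integral_le_of_norm_le (f := fun x => h x * p x) (hp.const_mul C) (ae_of_all _ hhp)
    _ = C := by rw [integral_const_mul, hp1, mul_one]

theorem integral_sub_integral_mul_density_eq_zero (hp1 : ∫ x, p x ∂μ = 1)
    (hh : AEStronglyMeasurable h μ) (hb : ∀ x, |h x| ≤ C) :
    ∫ x, (h x - ∫ y, h y * p y ∂μ) * p x ∂μ = 0 := by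
  have hp : Integrable p μ := Integrable.of_integral_ne_zero (by simp [hp1])
  have hhp : Integrable (fun x => h x * p x) μ := hp.bdd_mul hh (ae_of_all _ hb)
  simp_rw [sub_mul]
  rw [integral_sub hhp (hp.const_mul _), integral_const_mul, hp1, mul_one, sub_self]

theorem abs_sub_integral_mul_density_le (hp0 : ∀ x, 0 ≤ p x) (hp1 : ∫ x, p x ∂μ = 1)
    (hb : ∀ x, |h x| ≤ C) (x : α) : |h x - ∫ y, h y * p y ∂μ| ≤ 2 * C :=
  calc |h x - ∫ y, h y * p y ∂μ| ≤ |h x| + |∫ y, h y * p y ∂μ| := abs_sub _ _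
    _ ≤ 2 * C := by linarith [hb x, abs_integral_mul_density_le hp0 hp1 hb]

end Density

section CenteredGammaDens

variable {ν x t : ℝ}

theorem centeredGammaDens_of_neg_lt (hx : -ν < x) :
    centeredGammaDens ν x =
      2 ^ (-ν / 2) * (Real.Gamma (ν / 2))⁻¹ * (x + ν) ^ (ν / 2 - 1) * Real.exp (-(x + ν) / 2) :=
  if_pos hx

theorem centeredGammaDens_pos (hν : 0 < ν) (hx : -ν < x) : 0 < centeredGammaDens ν x := by
  have hxν : 0 < x + ν := by linarith
  have hΓ : 0 < Real.Gamma (ν / 2) := Real.Gamma_pos_of_pos (by linarith)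
  rw [centeredGammaDens_of_neg_lt hx]
  positivity

theorem centeredGammaDens_nonneg (hν : 0 < ν) (x : ℝ) : 0 ≤ centeredGammaDens ν x := by
  by_cases hx : -ν < x
  · exact (centeredGammaDens_pos hν hx).le
  · simp [centeredGammaDens, hx]

theorem integral_centeredGammaDens (hν : 0 < ν) :
    ∫ x in Ioi (-ν), centeredGammaDens ν x = 1 := by
  set K : ℝ := 2 ^ (-ν / 2) * (Real.Gamma (ν / 2))⁻¹
  have hΓ : Real.Gamma (ν / 2) ≠ 0 := (Real.Gamma_pos_of_pos (by linarith)).ne'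
  calc ∫ x in Ioi (-ν), centeredGammaDens ν x
      = ∫ x in Ioi (0 - ν), K * ((x + ν) ^ (ν / 2 - 1) * Real.exp (-(1 / 2 * (x + ν)))) := by
        rw [zero_sub]
        refine setIntegral_congr_fun measurableSet_Ioi fun x hx => ?_
        rw [centeredGammaDens_of_neg_lt hx]
        simp only [K]
        ring_nf
    _ = K * ((1 / (1 / 2)) ^ (ν / 2) * Real.Gamma (ν / 2)) := by
        rw [integral_Ioi_comp_add_right (fun u => K * (u ^ (ν / 2 - 1) * Real.exp (-(1 / 2 * u)))),
          integral_const_mul, Real.integral_rpow_mul_exp_neg_mul_Ioi (by linarith) (by norm_num)]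
    _ = 1 := by
        have h2 : (2 : ℝ) ^ (-ν / 2) * 2 ^ (ν / 2) = 1 := by
          rw [← Real.rpow_add two_pos, show -ν / 2 + ν / 2 = 0 by ring, Real.rpow_zero]
        rw [one_div_one_div, mul_mul_mul_comm, h2, inv_mul_cancel₀ hΓ, mul_one]

theorem integrableOn_centeredGammaDens (hν : 0 < ν) :
    IntegrableOn (centeredGammaDens ν) (Ioi (-ν)) :=
  Integrable.of_integral_ne_zero (by rw [integral_centeredGammaDens hν]; norm_num)

theorem centeredGammaDens_le_mul_exp (hν : 0 < ν) (hν2 : ν ≤ 2) (hx : -ν < x) (hxt : x ≤ t) :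
    centeredGammaDens ν t ≤
      centeredGammaDens ν x * Real.exp (x / 2) * Real.exp (-(1 / 2) * t) := by
  have hΓ : 0 < Real.Gamma (ν / 2) := Real.Gamma_pos_of_pos (by linarith)
  have hpow : (t + ν) ^ (ν / 2 - 1) ≤ (x + ν) ^ (ν / 2 - 1) :=
    Real.rpow_le_rpow_of_nonpos (by linarith) (by linarith) (by linarith)
  have hexp : Real.exp (-(t + ν) / 2) =
      Real.exp (-(x + ν) / 2) * Real.exp (x / 2) * Real.exp (-(1 / 2) * t) := by
    rw [← Real.exp_add, ← Real.exp_add]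
    ring_nf
  rw [centeredGammaDens_of_neg_lt (hx.trans_le hxt), centeredGammaDens_of_neg_lt hx, hexp]
  have := mul_le_mul_of_nonneg_right hpow (by positivity : (0 : ℝ) ≤
    2 ^ (-ν / 2) * (Real.Gamma (ν / 2))⁻¹ *
      (Real.exp (-(x + ν) / 2) * Real.exp (x / 2) * Real.exp (-(1 / 2) * t)))
  linarith

theorem integral_Ioi_centeredGammaDens_le (hν : 0 < ν) (hν2 : ν ≤ 2) (hx : -ν < x) :
    ∫ t in Ioi x, centeredGammaDens ν t ≤ 2 * centeredGammaDens ν x := by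
  have hint : IntegrableOn
      (fun t => centeredGammaDens ν x * Real.exp (x / 2) * Real.exp (-(1 / 2) * t)) (Ioi x) :=
    (exp_neg_integrableOn_Ioi x (by norm_num)).const_mul _
  have hcancel : Real.exp (x / 2) * Real.exp (-(1 / 2) * x) = 1 := by
    rw [← Real.exp_add, show x / 2 + -(1 / 2) * x = 0 by ring, Real.exp_zero]
  calc ∫ t in Ioi x, centeredGammaDens ν t
      ≤ ∫ t in Ioi x, centeredGammaDens ν x * Real.exp (x / 2) * Real.exp (-(1 / 2) * t) :=
        setIntegral_mono_on ((integrableOn_centeredGammaDens hν).mono_set (Ioi_subset_Ioi hx.le))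
          hint measurableSet_Ioi fun t ht => centeredGammaDens_le_mul_exp hν hν2 hx (le_of_lt ht)
    _ = 2 * centeredGammaDens ν x := by
        rw [integral_const_mul, integral_exp_mul_Ioi (by norm_num)]
        linear_combination (2 * centeredGammaDens ν x) * hcancel

theorem abs_intervalIntegral_centered_mul_centeredGammaDens_le (hν : 0 < ν) (hν2 : ν ≤ 2)
    {h : ℝ → ℝ} (hh : Measurable h) (hb : ∀ t, |h t| ≤ 1) (hx : -ν < x) :
    |∫ t in (-ν)..x, (h t - ∫ s in Ioi (-ν), h s * centeredGammaDens ν s) * centeredGammaDens ν t|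
      ≤ 4 * centeredGammaDens ν x := by
  set p := centeredGammaDens ν
  set E := ∫ s in Ioi (-ν), h s * p s
  have hp1 : ∫ t in Ioi (-ν), p t = 1 := integral_centeredGammaDens hν
  have hcentered (t : ℝ) : |h t - E| ≤ 2 := by
    simpa using abs_sub_integral_mul_density_le (centeredGammaDens_nonneg hν) hp1 hb t
  have hf (t : ℝ) : |(h t - E) * p t| ≤ 2 * p t := by
    rw [abs_mul, abs_of_nonneg (centeredGammaDens_nonneg hν t)]
    exact mul_le_mul_of_nonneg_right (hcentered t) (centeredGammaDens_nonneg hν t)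
  have hfint : IntegrableOn (fun t => (h t - E) * p t) (Ioi (-ν)) :=
    (integrableOn_centeredGammaDens hν).bdd_mul (hh.sub measurable_const).aestronglyMeasurable
      (ae_of_all _ hcentered)
  have htail : ∫ t in (-ν)..x, (h t - E) * p t = -∫ t in Ioi x, (h t - E) * p t := by
    rw [← intervalIntegral.integral_Ioi_sub_Ioi hfint hx.le,
      integral_sub_integral_mul_density_eq_zero hp1 hh.aestronglyMeasurable hb, zero_sub]
  calc |∫ t in (-ν)..x, (h t - E) * p t| = |∫ t in Ioi x, (h t - E) * p t| := by
        rw [htail, abs_neg]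
    _ ≤ ∫ t in Ioi x, 2 * p t :=
        norm_integral_le_of_norm_le (f := fun t => (h t - E) * p t)
          (((integrableOn_centeredGammaDens hν).mono_set (Ioi_subset_Ioi hx.le)).const_mul 2)
          (ae_of_all _ hf)
    _ ≤ 4 * p x := by
        rw [integral_const_mul]
        linarith [integral_Ioi_centeredGammaDens_le hν hν2 hx]

end CenteredGammaDens

/-- For `0 < ν ≤ 2` and any measurable `h` with `‖h‖_∞ ≤ 1`, the Stein solution
satisfies `|S(h)(x)| ≤ 2/(x+ν)` for all `x > −ν`; in particular `S(h)(x) → 0` as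
`x → ∞`, uniformly over all such `h`. -/
theorem stein_solution_vanishing_bound (ν : ℝ) (hν0 : 0 < ν) (hν2 : ν ≤ 2) :
    (∀ h : ℝ → ℝ, Measurable h → (∀ t, |h t| ≤ 1) →
        ∀ x : ℝ, -ν < x → |steinSol ν h x| ≤ 2 / (x + ν)) ∧
      ∀ ε : ℝ, 0 < ε → ∃ M : ℝ, ∀ x : ℝ, M ≤ x →
        ∀ h : ℝ → ℝ, Measurable h → (∀ t, |h t| ≤ 1) → |steinSol ν h x| ≤ ε := by
  have hbound : ∀ h : ℝ → ℝ, Measurable h → (∀ t, |h t| ≤ 1) →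
      ∀ x : ℝ, -ν < x → |steinSol ν h x| ≤ 2 / (x + ν) := by
    intro h hh hb x hx
    have hxν : 0 < x + ν := by linarith
    have hpx := centeredGammaDens_pos hν0 hx
    have hD : 0 < 2 * (x + ν) * centeredGammaDens ν x := by positivity
    rw [steinSol, abs_div, abs_of_pos hD]
    calc _ ≤ 4 * centeredGammaDens ν x / (2 * (x + ν) * centeredGammaDens ν x) :=
          div_le_div_of_nonneg_right
            (abs_intervalIntegral_centered_mul_centeredGammaDens_le hν0 hν2 hh hb hx) hD.le
      _ = 2 / (x + ν) := by field_simp; ring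
  refine ⟨hbound, fun ε hε => ⟨2 / ε, fun x hx h hh hb => ?_⟩⟩
  have hε' : 0 < 2 / ε := by positivity
  calc |steinSol ν h x| ≤ 2 / (x + ν) := hbound h hh hb x (by linarith)
    _ ≤ 2 / (2 / ε) := by gcongr; linarith
    _ = ε := by field_simp
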